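/- arXiv:1809.03608 — 2 statements merged into one kernel-verified Lean document; each statement's English description precedes it below -/
import Mathlib

section
/- Under the hypotheses of the covariance contraction bound (‖Ã_{N−1} ⋯ Ã_0‖ ≤ q̃ < 1), the sequence of norms ‖P_{Nk}‖ satisfies limsup_{k→∞} ‖P_{Nk}‖ ≤ γ/(1 − q̃²). -/
open Matrix

/-- Partial product Ã_{N−1} ⋯ Ã_{j+1} (empty product `1` when `j = N−1`). -/
noncomputable def tailProd {d : ℕ} (Atil : ℕ → Matrix (Fin d) (Fin d) ℝ)
    (N j : ℕ) : Matrix (Fin d) (Fin d) ℝ :=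
  ((List.range' (j + 1) (N - 1 - j)).reverse.map Atil).prod

/-- Full product Ã_{N−1} ⋯ Ã_0. -/
noncomputable def fullProd {d : ℕ} (Atil : ℕ → Matrix (Fin d) (Fin d) ℝ)
    (N : ℕ) : Matrix (Fin d) (Fin d) ℝ :=
  ((List.range N).reverse.map Atil).prod

lemma fullProd_succ {d : ℕ} (Atil : ℕ → Matrix (Fin d) (Fin d) ℝ) (n : ℕ) :
    fullProd Atil (n + 1) = Atil n * fullProd Atil n := by
  simp [fullProd, List.range_succ]

lemma tailProd_succ {d : ℕ} (Atil : ℕ → Matrix (Fin d) (Fin d) ℝ) {n j : ℕ} (h : j < n) :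
    tailProd Atil (n + 1) j = Atil n * tailProd Atil n j := by
  unfold tailProd
  have h1 : n + 1 - 1 - j = (n - 1 - j) + 1 := by omega
  have h2 : (j + 1) + 1 * (n - 1 - j) = n := by omega
  rw [h1, List.range'_concat, h2]
  simp

lemma tailProd_self {d : ℕ} (Atil : ℕ → Matrix (Fin d) (Fin d) ℝ) (n : ℕ) :
    tailProd Atil (n + 1) n = 1 := by
  simp [tailProd]

lemma fullProd_eq_tail {d : ℕ} (Atil : ℕ → Matrix (Fin d) (Fin d) ℝ) {N : ℕ} (hN : 0 < N) :
    fullProd Atil N = tailProd Atil N 0 * Atil 0 := by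
  obtain ⟨m, rfl⟩ : ∃ m, N = m + 1 := ⟨N - 1, by omega⟩
  unfold fullProd tailProd
  have : List.range (m + 1) = 0 :: List.range' 1 m := by
    rw [List.range_eq_range']
    simpa using (List.range'_succ : List.range' 0 (m + 1) 1 = _)
  rw [this]
  simp

lemma unroll {d : ℕ} (Atil R Q : ℕ → Matrix (Fin d) (Fin d) ℝ)
    (hQ : ∀ m, Q (m + 1) = Atil m * Q m * (Atil m)ᵀ + R m) (n : ℕ) :
    Q n = fullProd Atil n * Q 0 * (fullProd Atil n)ᵀ +
      ∑ j ∈ Finset.range n, tailProd Atil n j * R j * (tailProd Atil n j)ᵀ := by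
  induction n with
  | zero => simp [fullProd]
  | succ n ih =>
    have hsum : ∑ j ∈ Finset.range n,
        tailProd Atil (n + 1) j * R j * (tailProd Atil (n + 1) j)ᵀ =
        ∑ j ∈ Finset.range n,
        (Atil n * tailProd Atil n j) * R j * (Atil n * tailProd Atil n j)ᵀ :=
      Finset.sum_congr rfl (fun j hj => by
        rw [tailProd_succ Atil (Finset.mem_range.mp hj)])
    rw [hQ n, ih, fullProd_succ, Finset.sum_range_succ, tailProd_self, hsum]
    simp only [Matrix.transpose_mul, Matrix.mul_add, Matrix.add_mul, Finset.mul_sum,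
      Finset.sum_mul, Matrix.mul_assoc, Matrix.one_mul, Matrix.mul_one, Matrix.transpose_one]
    abel

/-- under the hypotheses of the covariance contraction bound
(`ν(Ã_{N−1}⋯Ã_0) ≤ q̃ < 1`), the norms of the subsampled covariance iterates
satisfy `limsup_{k→∞} ν(P_{Nk}) ≤ γ/(1 − q̃²)`. -/
theorem covariance_limsup {d : ℕ} (N : ℕ) (hN : 0 < N)
    (Atil R P : ℕ → Matrix (Fin d) (Fin d) ℝ)
    (hAper : ∀ k, Atil (k + N) = Atil k)
    (hRper : ∀ k, R (k + N) = R k)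
    (hRpsd : ∀ k, (R k).PosSemidef)
    (hP0 : (P 0).PosSemidef)
    (hrec : ∀ k, P (k + 1) = Atil k * P k * (Atil k)ᵀ + R k)
    (ν : Matrix (Fin d) (Fin d) ℝ → ℝ)
    (hν0 : ∀ M, 0 ≤ ν M)
    (hνadd : ∀ M₁ M₂, ν (M₁ + M₂) ≤ ν M₁ + ν M₂)
    (hνmul : ∀ M₁ M₂, ν (M₁ * M₂) ≤ ν M₁ * ν M₂)
    (hνT : ∀ M, ν Mᵀ = ν M)
    (qt : ℝ) (hq : ν (tailProd Atil N 0 * Atil 0) ≤ qt) (hq1 : qt < 1)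
    (γ : ℝ)
    (hγ : ν (∑ j ∈ Finset.range N, tailProd Atil N j * R j * (tailProd Atil N j)ᵀ) ≤ γ) :
    Filter.limsup (fun k : ℕ => ν (P (N * k))) Filter.atTop ≤ γ / (1 - qt ^ 2) := by
  -- basic positivity facts
  have hqt0 : 0 ≤ qt := le_trans (hν0 _) hq
  have hγ0 : 0 ≤ γ := le_trans (hν0 _) hγ
  have hq2 : qt ^ 2 < 1 := by nlinarith
  have h1q : 0 < 1 - qt ^ 2 := by linarith
  set c : ℝ := γ / (1 - qt ^ 2) with hc
  have hc0 : 0 ≤ c := div_nonneg hγ0 (le_of_lt h1q)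
  -- periodicity for shifted indices
  have hAp : ∀ k m, Atil (N * k + m) = Atil m := by
    intro k
    induction k with
    | zero => simp
    | succ k ih =>
      intro m
      have : N * (k + 1) + m = (N * k + m) + N := by ring
      rw [this, hAper, ih]
  have hRp : ∀ k m, R (N * k + m) = R m := by
    intro k
    induction k with
    | zero => simp
    | succ k ih =>
      intro m
      have : N * (k + 1) + m = (N * k + m) + N := by ring
      rw [this, hRper, ih]
  -- one-period step bound
  set a : ℕ → ℝ := fun k => ν (P (N * k)) with ha
  have hstep : ∀ k, a (k + 1) ≤ qt ^ 2 * a k + γ := by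
    intro k
    have hQ : ∀ m, P (N * k + (m + 1)) =
        Atil m * P (N * k + m) * (Atil m)ᵀ + R m := by
      intro m
      have : N * k + (m + 1) = (N * k + m) + 1 := by ring
      rw [this, hrec, hAp, hRp]
    have hu := unroll Atil R (fun m => P (N * k + m)) hQ N
    simp only [Nat.add_zero] at hu
    have hNk1 : N * (k + 1) = N * k + N := by ring
    have hF : ν (fullProd Atil N) ≤ qt := by
      rw [fullProd_eq_tail Atil hN]; exact hq
    have key : a (k + 1) ≤ ν (fullProd Atil N) * ν (P (N * k)) * ν (fullProd Atil N) + γ := by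
      calc a (k + 1) = ν (fullProd Atil N * P (N * k) * (fullProd Atil N)ᵀ +
            ∑ j ∈ Finset.range N, tailProd Atil N j * R j * (tailProd Atil N j)ᵀ) := by
              show ν (P (N * (k + 1))) = _
              rw [hNk1, hu]
        _ ≤ ν (fullProd Atil N * P (N * k) * (fullProd Atil N)ᵀ) + γ :=
              le_trans (hνadd _ _) (by linarith [hγ])
        _ ≤ ν (fullProd Atil N * P (N * k)) * ν (fullProd Atil N)ᵀ + γ := by
              linarith [hνmul (fullProd Atil N * P (N * k)) (fullProd Atil N)ᵀ]
        _ ≤ ν (fullProd Atil N) * ν (P (N * k)) * ν (fullProd Atil N) + γ := by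
              rw [hνT]
              nlinarith [hνmul (fullProd Atil N) (P (N * k)), hν0 (fullProd Atil N),
                hν0 (fullProd Atil N * P (N * k))]
    calc a (k + 1) ≤ ν (fullProd Atil N) * ν (P (N * k)) * ν (fullProd Atil N) + γ := key
      _ ≤ qt * ν (P (N * k)) * qt + γ := by
          nlinarith [mul_le_mul_of_nonneg_left
            (mul_le_mul hF hF (hν0 (fullProd Atil N)) hqt0) (hν0 (P (N * k)))]
      _ = qt ^ 2 * a k + γ := by rw [ha]; ring
  -- iterated bound
  have hbound : ∀ k, a k ≤ (qt ^ 2) ^ k * a 0 + c := by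
    intro k
    induction k with
    | zero => simp [hc0]
    | succ k ih =>
      have h2 : qt ^ 2 * a k ≤ qt ^ 2 * ((qt ^ 2) ^ k * a 0 + c) :=
        mul_le_mul_of_nonneg_left ih (by positivity)
      have hce : (1 - qt ^ 2) * c = γ := by rw [hc]; field_simp
      have h3 : qt ^ 2 * c + γ ≤ c := by linarith
      calc a (k + 1) ≤ qt ^ 2 * a k + γ := hstep k
        _ ≤ qt ^ 2 * ((qt ^ 2) ^ k * a 0 + c) + γ := by linarith
        _ = (qt ^ 2) ^ (k + 1) * a 0 + (qt ^ 2 * c + γ) := by ring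
        _ ≤ (qt ^ 2) ^ (k + 1) * a 0 + c := by linarith
  -- limsup
  have htend : Filter.Tendsto (fun k : ℕ => (qt ^ 2) ^ k * a 0 + c)
      Filter.atTop (nhds c) := by
    have h0 : Filter.Tendsto (fun k : ℕ => (qt ^ 2) ^ k) Filter.atTop (nhds 0) :=
      tendsto_pow_atTop_nhds_zero_of_lt_one (by positivity) hq2
    have := (h0.mul_const (a 0)).add_const c
    simpa using this
  have hcob : Filter.IsCoboundedUnder (· ≤ ·) Filter.atTop a :=
    Filter.IsBoundedUnder.isCoboundedUnder_le
      (Filter.isBoundedUnder_of ⟨0, fun k => hν0 _⟩)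
  have hbdd : Filter.IsBoundedUnder (· ≤ ·) Filter.atTop
      (fun k : ℕ => (qt ^ 2) ^ k * a 0 + c) := htend.isBoundedUnder_le
  calc Filter.limsup a Filter.atTop
      ≤ Filter.limsup (fun k : ℕ => (qt ^ 2) ^ k * a 0 + c) Filter.atTop :=
        Filter.limsup_le_limsup (Filter.Eventually.of_forall hbound) hcob hbdd
    _ = c := htend.limsup_eq
end

section
/- Let X ⊆ ℝⁿ be a measurable set, x a random vector with mean μ and positive definite covariance P, δ ∈ (0,1), and α = √(n/δ). If μ ∈ X ⊖ E(0, α^{-2} P^{-1}) (Pontryagin difference with the ellipsoid E(0,S) = {x : xᵀ S x ≤ 1}), then Prob(x ∈ X) ≥ 1 − δ. -/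
open Matrix MeasureTheory

/-- chance-constraint satisfaction via the multivariate Chebyshev
inequality.  If the mean `μv` lies in the Pontryagin difference of the constraint
set `Xset` with the confidence ellipsoid `E(0, α⁻² P⁻¹) = {e : eᵀ P⁻¹ e ≤ α²}`,
where `α = √(n/δ)`, then `Prob(x ∈ Xset) ≥ 1 − δ`. -/
theorem chance_constraint_satisfaction {n : ℕ}
    {Ω : Type*} [MeasurableSpace Ω] (μ : Measure Ω) [IsProbabilityMeasure μ]
    (x : Ω → Fin n → ℝ) (hx : Measurable x)
    (μv : Fin n → ℝ) (P : Matrix (Fin n) (Fin n) ℝ)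
    (hP : P.PosDef)
    (hint : ∀ i, Integrable (fun ω => x ω i) μ)
    (hint2 : ∀ i j, Integrable (fun ω => (x ω i - μv i) * (x ω j - μv j)) μ)
    (hmean : ∀ i, ∫ ω, x ω i ∂μ = μv i)
    (hcov : ∀ i j, ∫ ω, (x ω i - μv i) * (x ω j - μv j) ∂μ = P i j)
    (Xset : Set (Fin n → ℝ)) (hXmeas : MeasurableSet Xset)
    (δ : ℝ) (hδ0 : 0 < δ) (hδ1 : δ < 1)
    (α : ℝ) (hα : α = Real.sqrt ((n : ℝ) / δ))
    (hμv : ∀ e : Fin n → ℝ, e ⬝ᵥ (P⁻¹ *ᵥ e) ≤ α ^ 2 → μv + e ∈ Xset) :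
    1 - δ ≤ (μ {ω | x ω ∈ Xset}).toReal := by
  -- the quadratic form of the deviation
  set f : Ω → ℝ := fun ω => (x ω - μv) ⬝ᵥ (P⁻¹ *ᵥ (x ω - μv)) with hf
  have hα2 : α ^ 2 = (n : ℝ) / δ := by
    rw [hα, Real.sq_sqrt (div_nonneg (Nat.cast_nonneg n) hδ0.le)]
  have hfeq : ∀ ω, f ω = ∑ i, ∑ j, P⁻¹ i j * ((x ω i - μv i) * (x ω j - μv j)) := by
    intro ω
    simp only [hf, dotProduct, mulVec, Pi.sub_apply, Finset.mul_sum]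
    exact Finset.sum_congr rfl fun i _ => Finset.sum_congr rfl fun j _ => by ring
  have hfnn : ∀ ω, 0 ≤ f ω := by
    intro ω
    have := hP.inv.posSemidef.dotProduct_mulVec_nonneg (x ω - μv)
    rwa [star_trivial] at this
  -- the event that the deviation is in the confidence ellipsoid
  have hsub : {ω | f ω ≤ α ^ 2} ⊆ {ω | x ω ∈ Xset} := by
    intro ω hω
    have := hμv (x ω - μv) hω
    simpa using this
  -- measurability of f
  have hxim : ∀ i : Fin n, Measurable fun ω => x ω i := fun i =>
    (measurable_pi_apply i).comp hx
  have hfm : Measurable f := by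
    have : Measurable fun ω => ∑ i, ∑ j, P⁻¹ i j * ((x ω i - μv i) * (x ω j - μv j)) := by
      refine Finset.measurable_sum _ fun i _ => Finset.measurable_sum _ fun j _ => ?_
      exact (((hxim i).sub measurable_const).mul ((hxim j).sub measurable_const)).const_mul _
    have heq : f = fun ω => ∑ i, ∑ j, P⁻¹ i j * ((x ω i - μv i) * (x ω j - μv j)) :=
      funext hfeq
    rw [heq]; exact this
  have hfint : Integrable f μ := by
    have : Integrable (fun ω => ∑ i, ∑ j, P⁻¹ i j * ((x ω i - μv i) * (x ω j - μv j))) μ :=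
      integrable_finset_sum _ fun i _ => integrable_finset_sum _ fun j _ =>
        (hint2 i j).const_mul _
    exact this.congr (Filter.Eventually.of_forall fun ω => (hfeq ω).symm)
  -- expectation of the quadratic form is n
  have hEf : ∫ ω, f ω ∂μ = (n : ℝ) := by
    have h1 : ∫ ω, f ω ∂μ = ∑ i, ∑ j, P⁻¹ i j * P i j := by
      rw [integral_congr_ae (Filter.Eventually.of_forall hfeq),
        integral_finset_sum (f := fun i ω => ∑ j, P⁻¹ i j * ((x ω i - μv i) * (x ω j - μv j)))
          _ fun i _ => integrable_finset_sum _ fun j _ =>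
          (hint2 i j).const_mul _]
      refine Finset.sum_congr rfl fun i _ => ?_
      rw [integral_finset_sum _ fun j _ => (hint2 i j).const_mul _]
      exact Finset.sum_congr rfl fun j _ => by rw [integral_const_mul, hcov]
    have hsymm : ∀ i j, P j i = P i j := fun i j => by
      have := congrFun (congrFun hP.isHermitian j) i
      simpa [Matrix.conjTranspose_apply] using this.symm
    have hPP : P⁻¹ * P = 1 :=
      Matrix.nonsing_inv_mul P (isUnit_iff_ne_zero.mpr hP.det_pos.ne')
    have h2 : ∑ i, ∑ j, P⁻¹ i j * P i j = (P⁻¹ * P).trace := by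
      simp only [Matrix.trace, Matrix.diag, Matrix.mul_apply]
      exact Finset.sum_congr rfl fun i _ => Finset.sum_congr rfl fun j _ => by
        rw [hsymm i j]
    rw [h1, h2, hPP, Matrix.trace_one]
    simp
  -- case n = 0 : everything is in the set
  rcases Nat.eq_zero_or_pos n with hn | hn
  · have hall : {ω | x ω ∈ Xset} = Set.univ := by
      refine Set.eq_univ_of_forall fun ω => hsub ?_
      have : f ω = 0 := by
        rw [hfeq]
        subst hn
        simp
      simp only [Set.mem_setOf_eq, this]
      positivity
    rw [hall]
    simp
    linarith
  -- main case : Markov / Chebyshev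
  · have hαpos : 0 < α ^ 2 := by
      rw [hα2]
      positivity
    have hmar := mul_meas_ge_le_integral_of_nonneg
      (Filter.Eventually.of_forall hfnn) hfint (α ^ 2)
    rw [hEf] at hmar
    have hmeas_le : (μ {ω | α ^ 2 ≤ f ω}).toReal ≤ δ := by
      rw [hα2] at hmar hαpos
      have hδn : (μ {ω | (n:ℝ)/δ ≤ f ω}).toReal ≤ (n : ℝ) / ((n:ℝ)/δ) :=
        (le_div_iff₀ hαpos).mpr (by rw [measureReal_def] at hmar; linarith [hmar])
      have : (n : ℝ) / ((n:ℝ)/δ) = δ := by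
        field_simp
      rw [hα2]
      linarith [hδn, this ▸ hδn]
    -- complement computation
    have hcm : MeasurableSet {ω | f ω ≤ α ^ 2} := hfm measurableSet_Iic
    have hcompl : (μ {ω | f ω ≤ α ^ 2}).toReal = 1 - (μ {ω | α ^ 2 < f ω}).toReal := by
      have h1 : {ω | α ^ 2 < f ω} = {ω | f ω ≤ α ^ 2}ᶜ := by
        ext ω; simp [not_le]
      rw [h1, prob_compl_eq_one_sub hcm]
      rw [ENNReal.toReal_sub_of_le (prob_le_one) (by simp)]
      simp
    have hlt_le : (μ {ω | α ^ 2 < f ω}).toReal ≤ (μ {ω | α ^ 2 ≤ f ω}).toReal :=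
      ENNReal.toReal_mono (measure_ne_top μ _)
        (measure_mono fun ω (hω : α ^ 2 < f ω) => le_of_lt hω)
    have hmono : (μ {ω | f ω ≤ α ^ 2}).toReal ≤ (μ {ω | x ω ∈ Xset}).toReal :=
      ENNReal.toReal_mono (measure_ne_top μ _) (measure_mono hsub)
    linarith
end
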